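/- Assume Σ_{n≥1} K(n) = 1 and let h > 0 (so that F(0,h) > 0). Then for every N ≥ 1 the free homogeneous partition function satisfies the two-sided bound e^{−h} e^{F(0,h) N} ≤ Z^f_{N,h} ≤ e^{F(0,h) N} / (1 − e^{−F(0,h)}). -/

import Mathlib

open MeasureTheory ProbabilityTheory Filter Topology

/-- Constrained partition function with site-dependent log-weights `f`:
`Z_N = Σ_{k, 0=t₀<⋯<t_k=N} Π_i K(tᵢ-tᵢ₋₁) exp(f tᵢ)`, written as a sum
over compositions of `N` (for `N = 0` this equals `1`). -/
noncomputable def Zc (K : ℕ → ℝ) (f : ℕ → ℝ) (N : ℕ) : ℝ :=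
  ∑ c : Composition N,
    ∏ i : Fin c.length, K (c.blocksFun i) * Real.exp (f (c.sizeUpTo (i + 1)))

/-- Constrained homogeneous partition function `Z^c_{N,h}`. -/
noncomputable def ZcHom (K : ℕ → ℝ) (h : ℝ) (N : ℕ) : ℝ :=
  Zc K (fun _ => h) N

/-- Constrained disordered partition function `Z^c_{N,ω}` at parameters `(β, h)`. -/
noncomputable def ZcQ (K : ℕ → ℝ) (β h : ℝ) (ω : ℕ → ℝ) (N : ℕ) : ℝ :=
  Zc K (fun n => β * ω n + h) N

/-- Homogeneous free energy `F(0,h) = sup_{N ≥ 1} (1/N) log Z^c_{N,h}`. -/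
noncomputable def F0 (K : ℕ → ℝ) (h : ℝ) : ℝ :=
  ⨆ N : ℕ, Real.log (ZcHom K h (N + 1)) / (N + 1)

/-- Quenched free energy `F(β,h) = sup_{N ≥ 1} (1/N) 𝔼[log Z^c_{N,ω}]`. -/
noncomputable def Fq (K : ℕ → ℝ) (P : Measure (ℕ → ℝ)) (β h : ℝ) : ℝ :=
  ⨆ N : ℕ, (∫ ω, Real.log (ZcQ K β h ω (N + 1)) ∂P) / (N + 1)

/-- Homogeneous critical point `h_c(0) = -log Σ_{n≥1} K(n)`. -/
noncomputable def hc0 (K : ℕ → ℝ) : ℝ :=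
  - Real.log (∑' n : ℕ, K (n + 1))

/-- Quenched critical point `h_c(β) = inf {h | F(β,h) > 0}`. -/
noncomputable def hcQ (K : ℕ → ℝ) (P : Measure (ℕ → ℝ)) (β : ℝ) : ℝ :=
  sInf {h : ℝ | 0 < Fq K P β h}

/-- The renewal mass function: `u 0 = 1`, `u n = Σ_{m=1}^n K(m) u_{n-m}`. -/
noncomputable def renewalMass (K : ℕ → ℝ) : ℕ → ℝ
  | 0 => 1
  | n + 1 => ∑ m ∈ Finset.range (n + 1), K (m + 1) * renewalMass K (n - m)

/-- `\bar K(m) = 1 - Σ_{n=1}^m K(n)`. -/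
noncomputable def Kbar (K : ℕ → ℝ) (m : ℕ) : ℝ :=
  1 - ∑ n ∈ Finset.Icc 1 m, K n

/-- Free homogeneous partition function `Z^f_{N,h} = Σ_{n=0}^N Z^c_{n,h} \bar K(N-n)`. -/
noncomputable def ZfHom (K : ℕ → ℝ) (h : ℝ) (N : ℕ) : ℝ :=
  ∑ n ∈ Finset.range (N + 1), ZcHom K h n * Kbar K (N - n)

/-- `P` is the law of an IID sequence of standard Gaussian random variables. -/
def IsStdGaussianIID (P : Measure (ℕ → ℝ)) : Prop :=
  IsProbabilityMeasure P ∧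
    iIndepFun (fun n (ω : ℕ → ℝ) => ω n) P ∧
    ∀ n : ℕ, P.map (fun ω => ω n) = gaussianReal 0 1

/-!
Summing over compositions, `Z^c_{N,h} = e^{F N} u_N`, where `u` is the renewal mass of the tilted
kernel `K_F(n) = e^{h - F n} K(n)`. Its total mass is `e^h > 1` at `F = 0` and at most `1` at
`F = h`, so it equals `1` at some `F > 0`. For this `F` the renewal equation
`∑_{n ≤ N} u_n \bar K_F(N - n) = 1` gives `u_N ≤ 1`, hence `Z^c_N ≤ e^{F N}`, `F(0,h) ≤ F`, and the
upper bound on `Z^f_N` is a geometric sum. Since `\bar K(m) ≥ e^{F m - h} \bar K_F(m)`, the same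
equation gives `Z^f_N ≥ e^{-h} e^{F N}`; played against the geometric upper bound at any
`G > max(F(0,h), 0)`, this forces `F ≤ F(0,h)`.
-/

open Finset Real

namespace Composition

/-- Splitting off the first block, of size `m + 1`. -/
def consEquiv (N : ℕ) : (Σ m : Fin (N + 1), Composition (N - m)) ≃ Composition (N + 1) where
  toFun x :=
    ⟨(x.1 + 1) :: x.2.blocks,
      fun hi => (List.mem_cons.1 hi).elim (fun h => h ▸ Nat.succ_pos _) x.2.blocks_pos,
      by rw [List.sum_cons, x.2.blocks_sum]; omega⟩
  invFun c :=
    have hne : c.blocks ≠ [] := fun hb => by simpa [hb] using c.blocks_sum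
    have hpos : 0 < c.blocks.head hne := c.blocks_pos (List.head_mem hne)
    have hle : c.blocks.head hne ≤ N + 1 := by
      simpa using List.single_le_sum (fun _ _ => Nat.zero_le _) _ (List.head_mem hne)
    have hsum : c.blocks.head hne + c.blocks.tail.sum = N + 1 := by
      rw [← List.sum_cons, List.cons_head_tail, c.blocks_sum]
    ⟨⟨c.blocks.head hne - 1, by omega⟩,
      ⟨c.blocks.tail, fun hi => c.blocks_pos (List.mem_of_mem_tail hi),
        by show c.blocks.tail.sum = N - (c.blocks.head hne - 1); omega⟩⟩
  left_inv _ := rfl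
  right_inv c := by
    have hne : c.blocks ≠ [] := fun hb => by simpa [hb] using c.blocks_sum
    ext1
    show (c.blocks.head hne - 1 + 1) :: c.blocks.tail = c.blocks
    rw [Nat.sub_add_cancel (c.blocks_pos (List.head_mem hne)), List.cons_head_tail]

theorem prod_blocksFun {M : Type*} [CommMonoid M] {N : ℕ} (c : Composition N) (J : ℕ → M) :
    ∏ i, J (c.blocksFun i) = (c.blocks.map J).prod := by
  rw [← c.ofFn_blocksFun, List.map_ofFn, List.prod_ofFn]
  rfl

end Composition

theorem renewalMass_succ (J : ℕ → ℝ) (N : ℕ) :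
    renewalMass J (N + 1) = ∑ m ∈ range (N + 1), J (m + 1) * renewalMass J (N - m) := by
  rw [renewalMass]

theorem sum_prod_blocksFun_eq_renewalMass (J : ℕ → ℝ) (N : ℕ) :
    ∑ c : Composition N, ∏ i, J (c.blocksFun i) = renewalMass J N := by
  induction N using Nat.strong_induction_on with
  | _ N ih =>
    rcases N with _ | N
    · have hnil (c : Composition 0) : c.blocks = [] :=
        List.length_eq_zero_iff.1 (c.blocks_length.trans (by simp))
      simp [Composition.prod_blocksFun, hnil, renewalMass, composition_card]
    · rw [renewalMass_succ, ← (Composition.consEquiv N).sum_comp, ← univ_sigma_univ, sum_sigma,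
        ← Fin.sum_univ_eq_sum_range (fun m => J (m + 1) * renewalMass J (N - m))]
      refine sum_congr rfl fun m _ => ?_
      rw [← ih (N - m) (by omega), mul_sum]
      refine sum_congr rfl fun d _ => ?_
      simp only [Composition.prod_blocksFun]
      exact List.prod_cons

theorem renewalMass_nonneg {J : ℕ → ℝ} (hJ : ∀ n, 0 ≤ J n) (N : ℕ) : 0 ≤ renewalMass J N := by
  rw [← sum_prod_blocksFun_eq_renewalMass]
  exact sum_nonneg fun c _ => prod_nonneg fun i _ => hJ _

section Kbar

variable {J : ℕ → ℝ}

theorem Kbar_zero (J : ℕ → ℝ) : Kbar J 0 = 1 := by simp [Kbar]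

theorem Kbar_succ (J : ℕ → ℝ) (m : ℕ) : Kbar J (m + 1) = Kbar J m - J (m + 1) := by
  rw [Kbar, Kbar, sum_Icc_succ_top (by omega)]
  ring

theorem Kbar_eq_one_sub_sum_range (J : ℕ → ℝ) (m : ℕ) :
    Kbar J m = 1 - ∑ i ∈ range m, J (i + 1) := by
  induction m with
  | zero => simp [Kbar_zero]
  | succ m ih => rw [Kbar_succ, ih, sum_range_succ]; ring

theorem Kbar_le_one (hJ : ∀ n, 0 ≤ J n) (m : ℕ) : Kbar J m ≤ 1 := by
  rw [Kbar_eq_one_sub_sum_range]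
  linarith [sum_nonneg fun i (_ : i ∈ range m) => hJ (i + 1)]

theorem Kbar_nonneg (hJ : ∀ n, 0 ≤ J n) (hs : Summable fun n => J (n + 1))
    (h1 : ∑' n, J (n + 1) ≤ 1) (m : ℕ) : 0 ≤ Kbar J m := by
  rw [Kbar_eq_one_sub_sum_range]
  linarith [hs.sum_le_tsum (range m) fun i _ => hJ (i + 1)]

theorem Kbar_eq_tsum (hs : Summable fun n => J (n + 1)) (h1 : ∑' n, J (n + 1) = 1) (m : ℕ) :
    Kbar J m = ∑' i, J (i + m + 1) := by
  rw [Kbar_eq_one_sub_sum_range, ← h1, ← hs.sum_add_tsum_nat_add m]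
  ring

end Kbar

theorem sum_renewalMass_mul_Kbar (J : ℕ → ℝ) (N : ℕ) :
    ∑ n ∈ range (N + 1), renewalMass J n * Kbar J (N - n) = 1 := by
  induction N with
  | zero => simp [renewalMass, Kbar_zero]
  | succ N ih =>
    have hsplit : ∀ n ∈ range (N + 1),
        renewalMass J n * Kbar J (N + 1 - n)
          = renewalMass J n * Kbar J (N - n) - J (N - n + 1) * renewalMass J n := by
      intro n hn
      rw [show N + 1 - n = N - n + 1 by grind, Kbar_succ]
      ring
    have hlast : ∑ n ∈ range (N + 1), J (N - n + 1) * renewalMass J n = renewalMass J (N + 1) := by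
      rw [renewalMass_succ, ← sum_range_reflect]
      refine sum_congr rfl fun n hn => ?_
      rw [show N - (N + 1 - 1 - n) = n by grind, show N + 1 - 1 - n = N - n by omega]
    rw [sum_range_succ, Nat.sub_self, Kbar_zero, sum_congr rfl hsplit, sum_sub_distrib, ih, hlast]
    ring

theorem renewalMass_le_one {J : ℕ → ℝ} (hJ : ∀ n, 0 ≤ J n) (hs : Summable fun n => J (n + 1))
    (h1 : ∑' n, J (n + 1) ≤ 1) (N : ℕ) : renewalMass J N ≤ 1 := by
  calc renewalMass J N = renewalMass J N * Kbar J (N - N) := by simp [Kbar_zero]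
    _ ≤ ∑ n ∈ range (N + 1), renewalMass J n * Kbar J (N - n) :=
      single_le_sum (fun n _ => mul_nonneg (renewalMass_nonneg hJ n) (Kbar_nonneg hJ hs h1 _))
        (self_mem_range_succ N)
    _ = 1 := sum_renewalMass_mul_Kbar J N

noncomputable def tilt (K : ℕ → ℝ) (h F : ℝ) (n : ℕ) : ℝ := exp (h - F * n) * K n

section Tilt

variable {K : ℕ → ℝ} {h F : ℝ}

theorem ZcHom_eq_exp_mul_renewalMass_tilt (K : ℕ → ℝ) (h F : ℝ) (N : ℕ) :
    ZcHom K h N = exp (F * N) * renewalMass (tilt K h F) N := by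
  rw [ZcHom, Zc, ← sum_prod_blocksFun_eq_renewalMass, mul_sum]
  refine sum_congr rfl fun c _ => ?_
  have hblock (n : ℕ) : K n * exp h = exp (F * n) * tilt K h F n := by
    rw [tilt, ← mul_assoc, ← exp_add]
    ring_nf
  simp only [hblock, prod_mul_distrib, ← exp_sum, ← mul_sum, ← Nat.cast_sum, c.sum_blocksFun]

theorem ZcHom_zero (K : ℕ → ℝ) (h : ℝ) : ZcHom K h 0 = 1 := by
  simp [ZcHom_eq_exp_mul_renewalMass_tilt K h 0, renewalMass]

theorem ZcHom_nonneg (hK : ∀ n, 0 ≤ K n) (N : ℕ) : 0 ≤ ZcHom K h N := by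
  rw [ZcHom_eq_exp_mul_renewalMass_tilt K h 0]
  exact mul_nonneg (exp_nonneg _) (renewalMass_nonneg (fun n => mul_nonneg (exp_nonneg _) (hK n)) N)

theorem tilt_nonneg (hK : ∀ n, 0 ≤ K n) (n : ℕ) : 0 ≤ tilt K h F n :=
  mul_nonneg (exp_nonneg _) (hK n)

theorem tilt_succ_le (hK : ∀ n, 0 ≤ K n) (hF : 0 ≤ F) (n : ℕ) :
    tilt K h F (n + 1) ≤ exp h * K (n + 1) := by
  refine mul_le_mul_of_nonneg_right (exp_le_exp.2 ?_) (hK _)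
  have : 0 ≤ F * ((n + 1 : ℕ) : ℝ) := by positivity
  linarith

theorem summable_tilt (hK : ∀ n, 0 ≤ K n) (hs : Summable fun n => K (n + 1)) (hF : 0 ≤ F) :
    Summable fun n => tilt K h F (n + 1) :=
  .of_nonneg_of_le (fun _ => tilt_nonneg hK _) (tilt_succ_le hK hF) (hs.mul_left _)

theorem ZcHom_le_exp_of_tsum_tilt_eq_one (hK : ∀ n, 0 ≤ K n) (hs : Summable fun n => K (n + 1))
    (hF : 0 ≤ F) (hroot : ∑' n, tilt K h F (n + 1) = 1) (N : ℕ) :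
    ZcHom K h N ≤ exp (F * N) := by
  rw [ZcHom_eq_exp_mul_renewalMass_tilt K h F]
  exact mul_le_of_le_one_right (exp_nonneg _)
    (renewalMass_le_one (tilt_nonneg hK) (summable_tilt hK hs hF) hroot.le N)

theorem exists_tsum_tilt_eq_one (hK : ∀ n, 0 ≤ K n) (hs : Summable fun n => K (n + 1))
    (hK1 : ∑' n, K (n + 1) = 1) (hh : 0 < h) : ∃ F, 0 < F ∧ ∑' n, tilt K h F (n + 1) = 1 := by
  set Φ : ℝ → ℝ := fun F => ∑' n, tilt K h F (n + 1)
  have hΦ0 : Φ 0 = exp h := by simp [Φ, tilt, tsum_mul_left, hK1]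
  have hΦh : Φ h ≤ 1 := by
    rw [← hK1]
    refine (summable_tilt hK hs hh.le).tsum_le_tsum (fun n => ?_) hs
    refine mul_le_of_le_one_left (hK _) (exp_le_one_iff.2 ?_)
    have : 0 ≤ h * (n : ℝ) := by positivity
    push_cast
    linarith
  have hcont : ContinuousOn Φ (Set.Icc 0 h) := by
    refine continuousOn_tsum (fun n => by unfold tilt; fun_prop) (hs.mul_left (exp h))
      fun n F hF => ?_
    rw [Real.norm_of_nonneg (tilt_nonneg hK _)]
    exact tilt_succ_le hK hF.1 n
  obtain ⟨F, hF, hroot⟩ := intermediate_value_Icc' hh.le hcont ⟨hΦh, hΦ0 ▸ (one_lt_exp_iff.2 hh).le⟩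
  refine ⟨F, hF.1.lt_of_ne ?_, hroot⟩
  rintro rfl
  exact (one_lt_exp_iff.2 hh).ne' (hΦ0 ▸ hroot)

end Tilt

section FreeBounds

variable {K : ℕ → ℝ} {h F : ℝ}

theorem exp_mul_Kbar_tilt_le_Kbar (hK : ∀ n, 0 ≤ K n) (hs : Summable fun n => K (n + 1))
    (hK1 : ∑' n, K (n + 1) = 1) (hF : 0 ≤ F) (hroot : ∑' n, tilt K h F (n + 1) = 1) (m : ℕ) :
    exp (F * m - h) * Kbar (tilt K h F) m ≤ Kbar K m := by
  have hts := summable_tilt (h := h) hK hs hF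
  rw [Kbar_eq_tsum hs hK1, Kbar_eq_tsum hts hroot, ← tsum_mul_left]
  refine ((summable_nat_add_iff m).2 hts |>.mul_left _).tsum_le_tsum (fun i => ?_)
    ((summable_nat_add_iff m).2 hs)
  rw [tilt, ← mul_assoc, ← exp_add]
  refine mul_le_of_le_one_left (hK _) (exp_le_one_iff.2 ?_)
  have : 0 ≤ F * (i + 1 : ℝ) := by positivity
  push_cast
  linarith

theorem exp_neg_mul_exp_le_ZfHom (hK : ∀ n, 0 ≤ K n) (hs : Summable fun n => K (n + 1))
    (hK1 : ∑' n, K (n + 1) = 1) (hF : 0 ≤ F) (hroot : ∑' n, tilt K h F (n + 1) = 1) (N : ℕ) :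
    exp (-h) * exp (F * N) ≤ ZfHom K h N := by
  have hterm : ∀ n ∈ range (N + 1),
      exp (F * N - h) * (renewalMass (tilt K h F) n * Kbar (tilt K h F) (N - n))
        ≤ ZcHom K h n * Kbar K (N - n) := by
    intro n hn
    have hsplit : exp (F * N - h) = exp (F * n) * exp (F * (N - n : ℕ) - h) := by
      rw [← exp_add, Nat.cast_sub (Nat.lt_succ_iff.1 (mem_range.1 hn))]
      ring_nf
    rw [hsplit, ZcHom_eq_exp_mul_renewalMass_tilt K h F, mul_mul_mul_comm]
    exact mul_le_mul_of_nonneg_left (exp_mul_Kbar_tilt_le_Kbar hK hs hK1 hF hroot _)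
      (mul_nonneg (exp_nonneg _) (renewalMass_nonneg (tilt_nonneg hK) n))
  calc exp (-h) * exp (F * N)
      = exp (F * N - h) * ∑ n ∈ range (N + 1),
          renewalMass (tilt K h F) n * Kbar (tilt K h F) (N - n) := by
        rw [sum_renewalMass_mul_Kbar, mul_one, ← exp_add]
        ring_nf
    _ ≤ ZfHom K h N := by
      rw [mul_sum]
      exact sum_le_sum hterm

theorem sum_range_exp_mul_le {G : ℝ} (hG : 0 < G) (N : ℕ) :
    ∑ n ∈ range (N + 1), exp (G * n) ≤ exp (G * N) / (1 - exp (-G)) := by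
  have hreflect (k : ℕ) (hk : k ∈ range (N + 1)) :
      exp (G * (N - k : ℕ)) = exp (G * N) * exp (-G) ^ k := by
    rw [← exp_nat_mul, ← exp_add, Nat.cast_sub (Nat.lt_succ_iff.1 (mem_range.1 hk))]
    ring_nf
  rw [← sum_range_reflect, Nat.add_sub_cancel, sum_congr rfl hreflect, ← mul_sum, ← mul_one_div]
  have hgeom := geom_sum_Ico_le_of_lt_one (m := 0) (n := N + 1) (exp_nonneg (-G))
    (exp_lt_one_iff.2 (neg_lt_zero.2 hG))
  rw [Nat.Ico_zero_eq_range, pow_zero] at hgeom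
  exact mul_le_mul_of_nonneg_left hgeom (exp_nonneg _)

theorem ZfHom_le_of_ZcHom_le_exp (hK : ∀ n, 0 ≤ K n) {G : ℝ} (hG : 0 < G)
    (hZ : ∀ n, ZcHom K h n ≤ exp (G * n)) (N : ℕ) :
    ZfHom K h N ≤ exp (G * N) / (1 - exp (-G)) :=
  calc ZfHom K h N ≤ ∑ n ∈ range (N + 1), exp (G * n) :=
        sum_le_sum fun n _ =>
          (mul_le_of_le_one_right (ZcHom_nonneg hK n) (Kbar_le_one hK _)).trans (hZ n)
    _ ≤ _ := sum_range_exp_mul_le hG N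

end FreeBounds

theorem le_of_forall_mul_exp_le {c C F G : ℝ} (hc : 0 < c)
    (hbound : ∀ N : ℕ, c * exp (F * N) ≤ C * exp (G * N)) : F ≤ G := by
  by_contra! hGF
  obtain ⟨N, hN⟩ := exists_nat_gt (C / (c * (F - G)))
  have hCN : C < c * ((F - G) * N) := by
    rw [div_lt_iff₀ (by nlinarith)] at hN
    linarith
  have : C * exp (G * N) < c * exp (F * N) :=
    calc C * exp (G * N) < c * ((F - G) * N + 1) * exp (G * N) :=
          mul_lt_mul_of_pos_right (by linarith) (exp_pos _)
      _ ≤ c * exp ((F - G) * N) * exp (G * N) := by gcongr; exact add_one_le_exp _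
      _ = c * exp (F * N) := by rw [mul_assoc, ← exp_add]; ring_nf
  linarith [hbound N]

section FreeEnergy

variable {K : ℕ → ℝ} {h F G : ℝ}

theorem log_ZcHom_div_le (hK : ∀ n, 0 ≤ K n) (hG : 0 ≤ G) (hZ : ∀ n, ZcHom K h n ≤ exp (G * n))
    (N : ℕ) : log (ZcHom K h (N + 1)) / (N + 1) ≤ G := by
  rw [div_le_iff₀ (by positivity)]
  rcases (ZcHom_nonneg hK (N + 1)).eq_or_lt with hzero | hpos
  · rw [← hzero, log_zero]
    positivity
  · rw [log_le_iff_le_exp hpos]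
    exact_mod_cast hZ (N + 1)

theorem ZcHom_le_exp_F0
    (hbdd : BddAbove (Set.range fun N : ℕ => log (ZcHom K h (N + 1)) / (N + 1))) (N : ℕ) :
    ZcHom K h N ≤ exp (F0 K h * N) := by
  rcases N with _ | N
  · simp [ZcHom_zero]
  · calc ZcHom K h (N + 1) ≤ exp (log (ZcHom K h (N + 1))) := le_exp_log _
      _ ≤ exp (F0 K h * (N + 1 : ℕ)) := by
        push_cast
        exact exp_le_exp.2 ((div_le_iff₀ (by positivity)).1 (le_ciSup hbdd N))

theorem F0_eq_of_tsum_tilt_eq_one (hK : ∀ n, 0 ≤ K n) (hs : Summable fun n => K (n + 1))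
    (hK1 : ∑' n, K (n + 1) = 1) (hF : 0 < F) (hroot : ∑' n, tilt K h F (n + 1) = 1) :
    F0 K h = F := by
  have hZ := ZcHom_le_exp_of_tsum_tilt_eq_one hK hs hF.le hroot
  have hbdd : BddAbove (Set.range fun N : ℕ => log (ZcHom K h (N + 1)) / (N + 1)) :=
    ⟨F, Set.forall_mem_range.2 (log_ZcHom_div_le hK hF.le hZ)⟩
  refine le_antisymm (ciSup_le (log_ZcHom_div_le hK hF.le hZ)) ?_
  suffices F ≤ max (F0 K h) 0 from (le_max_iff.1 this).resolve_right hF.not_ge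
  refine le_of_forall_gt_imp_ge_of_dense fun G hG => ?_
  have hG0 : 0 < G := (le_max_right _ _).trans_lt hG
  have hZG (n : ℕ) : ZcHom K h n ≤ exp (G * n) :=
    (ZcHom_le_exp_F0 hbdd n).trans <| exp_le_exp.2 <|
      mul_le_mul_of_nonneg_right ((le_max_left _ _).trans hG.le) n.cast_nonneg
  exact le_of_forall_mul_exp_le (exp_pos (-h)) fun N =>
    ((exp_neg_mul_exp_le_ZfHom hK hs hK1 hF.le hroot N).trans
      (ZfHom_le_of_ZcHom_le_exp hK hG0 hZG N)).trans_eq (div_eq_inv_mul _ _)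

end FreeEnergy

theorem free_partition_function_bounds_general
    (K : ℕ → ℝ)
    (hKnn : ∀ n, 0 ≤ K n)
    (hKsummable : Summable fun n : ℕ => K (n + 1))
    (hpers : ∑' n : ℕ, K (n + 1) = 1) (h : ℝ) (hh : 0 < h) :
    0 < F0 K h ∧
    ∀ N : ℕ, 1 ≤ N →
      Real.exp (-h) * Real.exp (F0 K h * N) ≤ ZfHom K h N ∧
      ZfHom K h N ≤ Real.exp (F0 K h * N) / (1 - Real.exp (-(F0 K h))) := by
  obtain ⟨F, hF, hroot⟩ := exists_tsum_tilt_eq_one hKnn hKsummable hpers hh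
  rw [F0_eq_of_tsum_tilt_eq_one hKnn hKsummable hpers hF hroot]
  have hZ := ZcHom_le_exp_of_tsum_tilt_eq_one hKnn hKsummable hF.le hroot
  exact ⟨hF, fun N _ => ⟨exp_neg_mul_exp_le_ZfHom hKnn hKsummable hpers hF.le hroot N,
    ZfHom_le_of_ZcHom_le_exp hKnn hF hZ N⟩⟩

theorem free_partition_function_bounds
    (α : ℝ) (hα : 0 < α)
    (K L : ℕ → ℝ) (cK : ℝ) (hcK : 0 < cK)
    (hK0 : K 0 = 0) (hKnn : ∀ n, 0 ≤ K n)
    (hKsummable : Summable fun n : ℕ => K (n + 1))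
    (hKsum : ∑' n : ℕ, K (n + 1) ≤ 1)
    (hKform : ∀ n : ℕ, 1 ≤ n → K n = L n / (n : ℝ) ^ (1 + α))
    (hL : Tendsto L atTop (nhds cK))
    (hpers : ∑' n : ℕ, K (n + 1) = 1) (h : ℝ) (hh : 0 < h) :
    0 < F0 K h ∧
    ∀ N : ℕ, 1 ≤ N →
      Real.exp (-h) * Real.exp (F0 K h * N) ≤ ZfHom K h N ∧
      ZfHom K h N ≤ Real.exp (F0 K h * N) / (1 - Real.exp (-(F0 K h))) :=
  free_partition_function_bounds_general K hKnn hKsummable hpers h hh
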